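/- arXiv:1809.03165 — 11 statements merged into one kernel-verified Lean document; each statement's English description precedes it below -/
import Mathlib

section
/- Let N = 3. For every δ : Fin 3 → ℝ with δ 0 = 0 and every real e ≠ 0, let b = D δ + e·1_{(2,1)} (actual fault e on the session between nodes 2 and 1). Then the equation system for the assumed fault set E = {(1,0)} and measurements b has exactly one solution (δ̂, ê), namely δ̂ 1 = δ 1 − e, δ̂ 2 = δ 2, ê (1,0) = e and ê p = 0 for p ≠ (1,0). In particular this unique solution is wrong (δ̂ ≠ δ), so a 3-node system is not 1-resilient. -/
/-- The peer-to-peer synchronization sessions: ordered pairs `(i, j)` of nodes with `j < i`. -/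
abbrev Pair (N : ℕ) := {p : Fin N × Fin N // p.2 < p.1}

/-- The difference map `(D δ) (i, j) = δ i - δ j`. -/
def Dmap {N : ℕ} (δ : Fin N → ℝ) : Pair N → ℝ := fun p => δ p.1.1 - δ p.1.2

/-- The indicator vector of a pair `a`. -/
def ind {N : ℕ} (a : Pair N) : Pair N → ℝ := fun p => if p = a then 1 else 0

/-- `(dh, eh)` is a solution of the equation system for the assumed fault set `E`
and measurements `b`: `dh 0 = 0`, `eh` is supported on `E`, and `D dh + eh = b`. -/
def IsSolution {N : ℕ} (hN : 0 < N) (E : Set (Pair N)) (b : Pair N → ℝ)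
    (dh : Fin N → ℝ) (eh : Pair N → ℝ) : Prop :=
  dh ⟨0, hN⟩ = 0 ∧ (∀ p ∉ E, eh p = 0) ∧ ∀ p, Dmap dh p + eh p = b p

lemma pair3_cases (p : Pair 3) :
    p = ⟨(1, 0), by decide⟩ ∨ p = ⟨(2, 0), by decide⟩ ∨ p = ⟨(2, 1), by decide⟩ := by
  revert p; decide

/-- For `N = 3`, with an actual fault `e ≠ 0` on the session between nodes 2 and 1, the
equation system for the assumed fault set `{(1,0)}` has exactly one solution, namely
`dh 1 = δ 1 - e`, `dh 2 = δ 2`, `eh (1,0) = e` and `eh p = 0` otherwise; this unique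
solution is wrong, so a 3-node system is not 1-resilient. -/
theorem stmt_0 (δ : Fin 3 → ℝ) (hδ : δ 0 = 0) (e : ℝ) (he : e ≠ 0) :
    (∀ (dh : Fin 3 → ℝ) (eh : Pair 3 → ℝ),
      IsSolution (by norm_num) {(⟨(1, 0), by decide⟩ : Pair 3)}
          (fun p => Dmap δ p + e * ind (⟨(2, 1), by decide⟩ : Pair 3) p) dh eh ↔
        (dh = fun i => if i = 1 then δ 1 - e else δ i) ∧
          eh = e • ind (⟨(1, 0), by decide⟩ : Pair 3)) ∧
    (fun i : Fin 3 => if i = 1 then δ 1 - e else δ i) ≠ δ := by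
  constructor
  · intro dh eh
    constructor
    · rintro ⟨h0, hsupp, heq⟩
      have h10 := heq ⟨(1, 0), by decide⟩
      have h20 := heq ⟨(2, 0), by decide⟩
      have h21 := heq ⟨(2, 1), by decide⟩
      have e20 : eh ⟨(2, 0), by decide⟩ = 0 := hsupp _ (by simp)
      have e21 : eh ⟨(2, 1), by decide⟩ = 0 := hsupp _ (by simp)
      simp [Dmap, ind] at h10 h20 h21
      rw [e20] at h20
      rw [e21] at h21
      have hd0 : dh 0 = 0 := h0
      have hd2 : dh 2 = δ 2 := by rw [hd0, hδ] at h20; linarith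
      have hd1 : dh 1 = δ 1 - e := by rw [hd2] at h21; linarith
      have he1 : eh ⟨(1, 0), by decide⟩ = e := by rw [hd1, hd0, hδ] at h10; linarith
      constructor
      · funext i
        fin_cases i <;> simp_all
      · funext p
        rcases pair3_cases p with h | h | h <;> subst h <;>
          simp [ind, he1, e20, e21]
    · rintro ⟨hd, heh⟩
      subst hd heh
      refine ⟨by simp [hδ], ?_, ?_⟩
      · intro p hp
        simp only [Set.mem_singleton_iff] at hp
        simp [ind, hp]
      · intro p
        rcases pair3_cases p with h | h | h <;> subst h <;>
          simp [Dmap, ind, hδ] <;> ring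
  · intro h
    have := congrFun h 1
    simp at this
    exact he (by linarith)
end

section
/- A 4-node system is 1-resilient. That is, for N = 4, for every pair a ∈ P, every real e ≠ 0, and every δ : Fin 4 → ℝ with δ 0 = 0, setting b = D δ + e·1_a: (i) the equation system for (∅, b) has no solution; (ii) for every a′ ∈ P with a′ ≠ a, the equation system for ({a′}, b) has no solution; (iii) the equation system for ({a}, b) has exactly one solution, namely δ̂ = δ and ê = e·1_a. -/
/-- If `dh` and `δ` agree at `0` and have equal differences on all pairs except
possibly `a` and `a'`, then they agree everywhere (connectivity of the remaining graph). -/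
lemma core (a a' : Pair 4) (dh δ : Fin 4 → ℝ) (h0 : dh 0 = 0) (hδ : δ 0 = 0)
    (h : ∀ p : Pair 4, p ≠ a → p ≠ a' → dh p.1.1 - dh p.1.2 = δ p.1.1 - δ p.1.2) :
    ∀ i, dh i = δ i := by
  suffices hs : dh 1 = δ 1 ∧ dh 2 = δ 2 ∧ dh 3 = δ 3 by
    intro i
    fin_cases i
    · show dh 0 = δ 0; rw [h0, hδ]
    · exact hs.1
    · exact hs.2.1
    · exact hs.2.2
  have h00 : dh 0 - δ 0 = 0 := by rw [h0, hδ]; ring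
  fin_cases a <;> fin_cases a' <;>
    (try have e10 : dh 1 - dh 0 = δ 1 - δ 0 := h ⟨(1, 0), by decide⟩ (by decide) (by decide)
     try have e20 : dh 2 - dh 0 = δ 2 - δ 0 := h ⟨(2, 0), by decide⟩ (by decide) (by decide)
     try have e30 : dh 3 - dh 0 = δ 3 - δ 0 := h ⟨(3, 0), by decide⟩ (by decide) (by decide)
     try have e21 : dh 2 - dh 1 = δ 2 - δ 1 := h ⟨(2, 1), by decide⟩ (by decide) (by decide)
     try have e31 : dh 3 - dh 1 = δ 3 - δ 1 := h ⟨(3, 1), by decide⟩ (by decide) (by decide)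
     try have e32 : dh 3 - dh 2 = δ 3 - δ 2 := h ⟨(3, 2), by decide⟩ (by decide) (by decide)
     exact ⟨by linarith, by linarith, by linarith⟩)

/-- A 4-node system is 1-resilient. -/
theorem stmt_2 (a : Pair 4) (e : ℝ) (he : e ≠ 0) (δ : Fin 4 → ℝ) (hδ : δ 0 = 0) :
    (¬ ∃ (dh : Fin 4 → ℝ) (eh : Pair 4 → ℝ),
        IsSolution (by norm_num) (∅ : Set (Pair 4))
          (fun p => Dmap δ p + e * ind a p) dh eh) ∧
    (∀ a' : Pair 4, a' ≠ a →
      ¬ ∃ (dh : Fin 4 → ℝ) (eh : Pair 4 → ℝ),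
        IsSolution (by norm_num) ({a'} : Set (Pair 4))
          (fun p => Dmap δ p + e * ind a p) dh eh) ∧
    (∀ (dh : Fin 4 → ℝ) (eh : Pair 4 → ℝ),
      IsSolution (by norm_num) ({a} : Set (Pair 4))
          (fun p => Dmap δ p + e * ind a p) dh eh ↔
        dh = δ ∧ eh = e • ind a) := by
  refine ⟨?_, ?_, ?_⟩
  · rintro ⟨dh, eh, h0, hsupp, heq⟩
    have h0' : dh 0 = 0 := h0
    have hz : ∀ p, eh p = 0 := fun p => hsupp p (Set.notMem_empty p)
    have hcore : ∀ i, dh i = δ i := by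
      apply core a a dh δ h0' hδ
      intro p hp _
      have := heq p
      simp only [Dmap, ind, if_neg hp, hz p] at this
      linarith
    have := heq a
    simp only [Dmap, ind, if_pos rfl, if_true, eq_self_iff_true, hz a, hcore a.1.1, hcore a.1.2] at this
    exact he (by linarith)
  · rintro a' ha' ⟨dh, eh, h0, hsupp, heq⟩
    have h0' : dh 0 = 0 := h0
    have hcore : ∀ i, dh i = δ i := by
      apply core a a' dh δ h0' hδ
      intro p hp hp'
      have hz : eh p = 0 := hsupp p (by simpa using hp')
      have := heq p
      simp only [Dmap, ind, if_neg hp, hz] at this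
      linarith
    have hza : eh a = 0 := hsupp a (by simpa using fun h => ha' h.symm)
    have := heq a
    simp only [Dmap, ind, if_pos rfl, if_true, eq_self_iff_true, hza, hcore a.1.1, hcore a.1.2] at this
    exact he (by linarith)
  · intro dh eh
    constructor
    · rintro ⟨h0, hsupp, heq⟩
      have h0' : dh 0 = 0 := h0
      have hcore : ∀ i, dh i = δ i := by
        apply core a a dh δ h0' hδ
        intro p hp _
        have hz : eh p = 0 := hsupp p (by simpa using hp)
        have := heq p
        simp only [Dmap, ind, if_neg hp, hz] at this
        linarith
      refine ⟨funext hcore, funext fun p => ?_⟩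
      have := heq p
      simp only [Dmap, hcore p.1.1, hcore p.1.2] at this
      simp only [Pi.smul_apply, smul_eq_mul]
      linarith
    · rintro ⟨rfl, rfl⟩
      refine ⟨hδ, fun p hp => ?_, fun p => ?_⟩
      · simp only [Set.mem_singleton_iff] at hp
        simp [ind, hp]
      · simp [ind]
end

section
/- Let N = 4. For every δ : Fin 4 → ℝ with δ 0 = 0 and every real e ≠ 0, let b = D δ + e·1_{(2,0)} (actual fault e on the session between nodes 2 and 0). Then the equation system for the assumed fault set E = {(1,0)} and measurements b has no solution. -/
/-- For `N = 4`, with an actual fault `e ≠ 0` on the session between nodes 2 and 0, the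
equation system for the assumed fault set `{(1,0)}` has no solution. -/
theorem stmt_3 (δ : Fin 4 → ℝ) (hδ : δ 0 = 0) (e : ℝ) (he : e ≠ 0) :
    ¬ ∃ (dh : Fin 4 → ℝ) (eh : Pair 4 → ℝ),
      IsSolution (by norm_num) ({⟨(1, 0), by decide⟩} : Set (Pair 4))
        (fun p => Dmap δ p + e * ind (⟨(2, 0), by decide⟩ : Pair 4) p) dh eh := by
  rintro ⟨dh, eh, h0, hsupp, heq⟩
  have e30 : eh ⟨(3,0), by decide⟩ = 0 := hsupp _ (by simp)
  have e32 : eh ⟨(3,2), by decide⟩ = 0 := hsupp _ (by simp)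
  have e20 : eh ⟨(2,0), by decide⟩ = 0 := hsupp _ (by simp)
  have h30 := heq ⟨(3,0), by decide⟩
  have h32 := heq ⟨(3,2), by decide⟩
  have h20 := heq ⟨(2,0), by decide⟩
  simp only [Dmap, ind] at h30 h32 h20
  norm_num [(by decide : ¬((3:Fin 4) = 2))] at h30 h32 h20
  rw [e30] at h30
  rw [e32] at h32
  rw [e20] at h20
  have h0' : dh 0 = 0 := h0
  apply he
  have : dh 3 - dh 0 = δ 3 - δ 0 := by linarith
  linarith
end

section
/- A 4-node system is not 2-resilient. Concretely, for N = 4, every δ : Fin 4 → ℝ with δ 0 = 0, and every real e ≠ 0, let b = D δ + e·1_{(1,0)} + e·1_{(2,0)} (two equal actual faults e on the sessions between nodes 1 and 0 and between nodes 2 and 0). Then the equation system for the assumed fault set E = {(3,0)} and measurements b has exactly one solution, namely δ̂ j = δ j + e for j = 1,2,3, ê (3,0) = −e, and ê p = 0 for p ≠ (3,0); this unique solution is wrong. -/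
/-- A 4-node system is not 2-resilient: with equal actual faults `e ≠ 0` on the sessions
`(1,0)` and `(2,0)`, the equation system for the assumed fault set `{(3,0)}` has exactly
one solution, namely `dh j = δ j + e` for `j = 1,2,3`, `eh (3,0) = -e` and `eh p = 0`
otherwise; this unique solution is wrong. -/
theorem stmt_4 (δ : Fin 4 → ℝ) (hδ : δ 0 = 0) (e : ℝ) (he : e ≠ 0) :
    (∀ (dh : Fin 4 → ℝ) (eh : Pair 4 → ℝ),
      IsSolution (by norm_num) ({⟨(3, 0), by decide⟩} : Set (Pair 4))
          (fun p => Dmap δ p + e * ind (⟨(1, 0), by decide⟩ : Pair 4) p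
            + e * ind (⟨(2, 0), by decide⟩ : Pair 4) p) dh eh ↔
        (dh = fun j => if j = 0 then 0 else δ j + e) ∧
          eh = (-e) • ind (⟨(3, 0), by decide⟩ : Pair 4)) ∧
    (fun j : Fin 4 => if j = 0 then (0 : ℝ) else δ j + e) ≠ δ := by
  constructor
  · intro dh eh
    constructor
    · rintro ⟨h0, hsupp, heq⟩
      have e10 := heq ⟨(1, 0), by decide⟩
      have e20 := heq ⟨(2, 0), by decide⟩
      have e30 := heq ⟨(3, 0), by decide⟩
      have e31 := heq ⟨(3, 1), by decide⟩
      have z10 : eh ⟨(1, 0), by decide⟩ = 0 := hsupp _ (by simp [Set.mem_singleton_iff])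
      have z20 : eh ⟨(2, 0), by decide⟩ = 0 := hsupp _ (by simp [Set.mem_singleton_iff])
      have z21 : eh ⟨(2, 1), by decide⟩ = 0 := hsupp _ (by simp [Set.mem_singleton_iff])
      have z31 : eh ⟨(3, 1), by decide⟩ = 0 := hsupp _ (by simp [Set.mem_singleton_iff])
      have z32 : eh ⟨(3, 2), by decide⟩ = 0 := hsupp _ (by simp [Set.mem_singleton_iff])
      simp only [Dmap, ind] at e10 e20 e30 e31
      norm_num at e10 e20 e30 e31
      have hd1 : dh 1 = δ 1 + e := by
        have : dh 1 - dh 0 + eh ⟨(1,0), by decide⟩ = δ 1 - δ 0 + e := by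
          simpa using e10
        rw [hδ, z10] at this
        have h0' : dh 0 = 0 := by simpa using h0
        linarith
      have hd2 : dh 2 = δ 2 + e := by
        have : dh 2 - dh 0 + eh ⟨(2,0), by decide⟩ = δ 2 - δ 0 + e := by
          simpa using e20
        rw [hδ, z20] at this
        have h0' : dh 0 = 0 := by simpa using h0
        linarith
      have hd3 : dh 3 = δ 3 + e := by
        have : dh 3 - dh 1 + eh ⟨(3,1), by decide⟩ = δ 3 - δ 1 := by
          simpa using e31
        rw [hd1, z31] at this; linarith
      have he30 : eh ⟨(3,0), by decide⟩ = -e := by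
        have : dh 3 - dh 0 + eh ⟨(3,0), by decide⟩ = δ 3 - δ 0 := by
          simpa using e30
        rw [hδ, hd3] at this
        have h0' : dh 0 = 0 := by simpa using h0
        linarith
      constructor
      · funext j
        fin_cases j <;> simp_all
      · funext p
        by_cases hp : p = ⟨(3,0), by decide⟩
        · subst hp; simp [ind, he30]
        · have := hsupp p (by simpa [Set.mem_singleton_iff] using hp)
          simp [ind, hp, this]
    · rintro ⟨hdh, heh⟩
      subst hdh heh
      refine ⟨by norm_num, ?_, ?_⟩
      · intro p hp
        simp [Set.mem_singleton_iff] at hp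
        simp [ind, hp]
      · intro p
        obtain ⟨⟨i, j⟩, hij⟩ := p
        fin_cases i <;> fin_cases j <;>
          first
            | exact absurd hij (by decide)
            | (simp_all [Dmap, ind, Subtype.ext_iff, Prod.ext_iff]; try ring_nf)
  · intro h
    have := congrFun h 1
    simp at this
    exact he (by linarith)
end

section
/- Let N = 4. For every δ : Fin 4 → ℝ with δ 0 = 0 and all reals e10, e20 with e10 ≠ e20, let b = D δ + e10·1_{(1,0)} + e20·1_{(2,0)}. Then the equation system for the assumed fault set E = {(3,0)} and measurements b has no solution. -/
/-- For `N = 4`, with actual faults `e10 ≠ e20` on the sessions `(1,0)` and `(2,0)`, the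
equation system for the assumed fault set `{(3,0)}` has no solution. -/
theorem stmt_6 (δ : Fin 4 → ℝ) (hδ : δ 0 = 0) (e10 e20 : ℝ) (hne : e10 ≠ e20) :
    ¬ ∃ (dh : Fin 4 → ℝ) (eh : Pair 4 → ℝ),
      IsSolution (by norm_num) ({⟨(3, 0), by decide⟩} : Set (Pair 4))
        (fun p => Dmap δ p + e10 * ind (⟨(1, 0), by decide⟩ : Pair 4) p
          + e20 * ind (⟨(2, 0), by decide⟩ : Pair 4) p) dh eh := by
  rintro ⟨dh, eh, h0, hsupp, heq⟩
  have p10 : Pair 4 := ⟨(1, 0), by decide⟩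
  have h1 := heq ⟨(1, 0), by decide⟩
  have h2 := heq ⟨(2, 0), by decide⟩
  have h3 := heq ⟨(2, 1), by decide⟩
  have z1 := hsupp ⟨(1, 0), by decide⟩ (by simp)
  have z2 := hsupp ⟨(2, 0), by decide⟩ (by simp)
  have z3 := hsupp ⟨(2, 1), by decide⟩ (by simp)
  simp [Dmap, ind, z1, z2, z3] at h1 h2 h3
  apply hne
  linarith
end

section
/- A 5-node system is 1-resilient. That is, for N = 5, for every pair a ∈ P, every real e ≠ 0, and every δ : Fin 5 → ℝ with δ 0 = 0, setting b = D δ + e·1_a: (i) the equation system for (∅, b) has no solution; (ii) for every a′ ∈ P with a′ ≠ a, the equation system for ({a′}, b) has no solution; (iii) the equation system for ({a}, b) has exactly one solution, namely δ̂ = δ and ê = e·1_a. -/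
def good (a a' : Pair 5) (i j : Fin 5) : Prop :=
  i = j ∨ (a.1 ≠ (i, j) ∧ a.1 ≠ (j, i) ∧ a'.1 ≠ (i, j) ∧ a'.1 ≠ (j, i))

instance : DecidablePred fun p : Fin 5 × Fin 5 => p.2 < p.1 := fun _ => inferInstance

instance (a a' : Pair 5) (i j : Fin 5) : Decidable (good a a' i j) := by
  unfold good; infer_instance

lemma exists_mid (a a' : Pair 5) (i j : Fin 5) :
    ∃ k, good a a' i k ∧ good a a' k j := by revert a a' i j; decide

lemma eq_of_good (φ : Fin 5 → ℝ) (a a' : Pair 5)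
    (H : ∀ p : Pair 5, p ≠ a → p ≠ a' → φ p.1.1 = φ p.1.2)
    {i j : Fin 5} (h : good a a' i j) : φ i = φ j := by
  rcases h with rfl | ⟨h1, h2, h3, h4⟩
  · rfl
  · rcases lt_trichotomy j i with hlt | heq | hgt
    · exact H ⟨(i, j), hlt⟩ (fun h => h1 (congrArg Subtype.val h).symm)
        (fun h => h3 (congrArg Subtype.val h).symm)
    · rw [heq]
    · exact (H ⟨(j, i), hgt⟩ (fun h => h2 (congrArg Subtype.val h).symm)
        (fun h => h4 (congrArg Subtype.val h).symm)).symm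

lemma const_of_good (φ : Fin 5 → ℝ) (a a' : Pair 5)
    (H : ∀ p : Pair 5, p ≠ a → p ≠ a' → φ p.1.1 = φ p.1.2)
    (h0 : φ 0 = 0) : ∀ i, φ i = 0 := by
  intro i
  obtain ⟨k, hk1, hk2⟩ := exists_mid a a' i 0
  rw [← h0, eq_of_good φ a a' H hk1, eq_of_good φ a a' H hk2]

/-- A 5-node system is 1-resilient. -/
theorem stmt_7 (a : Pair 5) (e : ℝ) (he : e ≠ 0) (δ : Fin 5 → ℝ) (hδ : δ 0 = 0) :
    (¬ ∃ (dh : Fin 5 → ℝ) (eh : Pair 5 → ℝ),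
        IsSolution (by norm_num) (∅ : Set (Pair 5))
          (fun p => Dmap δ p + e * ind a p) dh eh) ∧
    (∀ a' : Pair 5, a' ≠ a →
      ¬ ∃ (dh : Fin 5 → ℝ) (eh : Pair 5 → ℝ),
        IsSolution (by norm_num) ({a'} : Set (Pair 5))
          (fun p => Dmap δ p + e * ind a p) dh eh) ∧
    (∀ (dh : Fin 5 → ℝ) (eh : Pair 5 → ℝ),
      IsSolution (by norm_num) ({a} : Set (Pair 5))
          (fun p => Dmap δ p + e * ind a p) dh eh ↔
        dh = δ ∧ eh = e • ind a) := by

  have key : ∀ (a' : Pair 5) (dh : Fin 5 → ℝ) (eh : Pair 5 → ℝ), dh ⟨0, by norm_num⟩ = 0 →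
      (∀ p : Pair 5, p ≠ a' → eh p = 0) →
      (∀ p, Dmap dh p + eh p = Dmap δ p + e * ind a p) →
      ∀ i, dh i = δ i := by
    intro a' dh eh h0 hsupp heq
    have H : ∀ p : Pair 5, p ≠ a → p ≠ a' → (fun i => dh i - δ i) p.1.1 = (fun i => dh i - δ i) p.1.2 := by
      intro p hpa hpa'
      have := heq p
      simp only [Dmap, ind, if_neg hpa, mul_zero, add_zero, hsupp p hpa'] at this
      simp only []
      linarith
    have h00 : (fun i => dh i - δ i) 0 = 0 := by
      simp only []
      have : dh 0 = 0 := h0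
      rw [this, hδ, sub_zero]
    have := const_of_good (fun i => dh i - δ i) a a' H h00
    intro i
    have hi := this i
    linarith
  have hia : ind a a = 1 := by simp [ind]
  refine ⟨?_, ?_, ?_⟩
  · rintro ⟨dh, eh, h0, hsupp, heq⟩
    have hz : ∀ p : Pair 5, p ≠ a → eh p = 0 := fun p _ => hsupp p (Set.notMem_empty p)
    have hd := key a dh eh h0 hz heq
    have := heq a
    simp only [Dmap, hia, mul_one, hd, hsupp a (Set.notMem_empty a), add_zero] at this
    exact he (by linarith)
  · rintro a' ha' ⟨dh, eh, h0, hsupp, heq⟩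
    have hz : ∀ p : Pair 5, p ≠ a' → eh p = 0 := fun p hp => hsupp p hp
    have hd := key a' dh eh h0 hz heq
    have := heq a
    have hea : eh a = 0 := hz a (Ne.symm ha')
    simp only [Dmap, hia, mul_one, hd, hea, add_zero] at this
    exact he (by linarith)
  · intro dh eh
    constructor
    · rintro ⟨h0, hsupp, heq⟩
      have hz : ∀ p : Pair 5, p ≠ a → eh p = 0 := fun p hp => hsupp p hp
      have hd := key a dh eh h0 hz heq
      refine ⟨funext hd, funext fun p => ?_⟩
      have := heq p
      simp only [Dmap, hd] at this
      simp only [Pi.smul_apply, smul_eq_mul]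
      linarith
    · rintro ⟨rfl, rfl⟩
      refine ⟨hδ, fun p hp => ?_, fun p => ?_⟩
      · have hp' : p ≠ a := hp
        simp only [Pi.smul_apply, smul_eq_mul, ind, if_neg hp', mul_zero]
      · simp [Pi.smul_apply, smul_eq_mul]
end

section
/- A 5-node system is not 2-resilient. Concretely, for N = 5, every δ : Fin 5 → ℝ with δ 0 = 0, and every real e ≠ 0, let b = D δ + e·1_{(1,0)} + (−e)·1_{(4,1)} (actual faults e on the session between nodes 1 and 0 and −e on the session between nodes 4 and 1). Then the equation system for the assumed fault set E = {(2,1), (3,1)} and measurements b has exactly one solution, namely δ̂ 1 = δ 1 + e, δ̂ 2 = δ 2, δ̂ 3 = δ 3, δ̂ 4 = δ 4, ê (2,1) = e, ê (3,1) = e, and ê p = 0 for all other p; this unique solution is wrong. -/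
/-- A 5-node system is not 2-resilient: with actual faults `e ≠ 0` on the session `(1,0)`
and `-e` on the session `(4,1)`, the equation system for the assumed fault set
`{(2,1), (3,1)}` has exactly one solution, namely `dh 1 = δ 1 + e`, `dh j = δ j` for
`j = 2,3,4`, `eh (2,1) = eh (3,1) = e` and `eh p = 0` otherwise; this unique solution
is wrong. -/
theorem stmt_8 (δ : Fin 5 → ℝ) (hδ : δ 0 = 0) (e : ℝ) (he : e ≠ 0) :
    (∀ (dh : Fin 5 → ℝ) (eh : Pair 5 → ℝ),
      IsSolution (by norm_num)
          ({⟨(2, 1), by decide⟩, ⟨(3, 1), by decide⟩} : Set (Pair 5))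
          (fun p => Dmap δ p + e * ind (⟨(1, 0), by decide⟩ : Pair 5) p
            + (-e) * ind (⟨(4, 1), by decide⟩ : Pair 5) p) dh eh ↔
        (dh = fun i => if i = 1 then δ 1 + e else δ i) ∧
          eh = e • ind (⟨(2, 1), by decide⟩ : Pair 5)
            + e • ind (⟨(3, 1), by decide⟩ : Pair 5)) ∧
    (fun i : Fin 5 => if i = 1 then δ 1 + e else δ i) ≠ δ := by
  constructor
  · intro dh eh
    constructor
    · rintro ⟨h0, hsupp, heq⟩
      have h10 := heq ⟨(1,0), by decide⟩
      have h20 := heq ⟨(2,0), by decide⟩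
      have h30 := heq ⟨(3,0), by decide⟩
      have h40 := heq ⟨(4,0), by decide⟩
      have h21 := heq ⟨(2,1), by decide⟩
      have h31 := heq ⟨(3,1), by decide⟩
      have e10 := hsupp ⟨(1,0), by decide⟩ (by simp [Set.mem_insert_iff])
      have e20 := hsupp ⟨(2,0), by decide⟩ (by simp [Set.mem_insert_iff])
      have e30 := hsupp ⟨(3,0), by decide⟩ (by simp [Set.mem_insert_iff])
      have e40 := hsupp ⟨(4,0), by decide⟩ (by simp [Set.mem_insert_iff])
      have h0' : dh 0 = 0 := h0
      simp [Dmap, ind, h0', hδ] at h10 h20 h30 h40 h21 h31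
      rw [e10] at h10; rw [e20] at h20; rw [e30] at h30; rw [e40] at h40
      have hd1 : dh 1 = δ 1 + e := by linarith
      have hd2 : dh 2 = δ 2 := by linarith
      have hd3 : dh 3 = δ 3 := by linarith
      have hd4 : dh 4 = δ 4 := by linarith
      constructor
      · funext i
        fin_cases i <;> simp [h0', hδ, hd1, hd2, hd3, hd4]
      · funext p
        by_cases hp21 : p = ⟨(2,1), by decide⟩
        · subst hp21
          simp [ind]
          linarith
        · by_cases hp31 : p = ⟨(3,1), by decide⟩
          · subst hp31
            simp [ind]
            linarith
          · have := hsupp p (by simp [Set.mem_insert_iff, hp21, hp31])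
            simp [this, ind, hp21, hp31]
    · rintro ⟨rfl, rfl⟩
      refine ⟨by norm_num [hδ], ?_, ?_⟩
      · intro p hp
        simp [Set.mem_insert_iff] at hp
        simp [ind, hp.1, hp.2]
      · intro p
        obtain ⟨⟨i, j⟩, hij⟩ := p
        fin_cases i <;> fin_cases j <;>
          first
          | exact absurd hij (by decide)
          | (simp only [Dmap, ind, Pi.add_apply, Pi.smul_apply, smul_eq_mul,
               Subtype.mk.injEq, Prod.mk.injEq]
             norm_num [hδ, Fin.ext_iff]
             try norm_num [show ((3:Fin 5):ℕ) = 3 from rfl, show ((4:Fin 5):ℕ) = 4 from rfl]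
             try ring)
  · intro h
    have := congrFun h 1
    simp at this
    exact he this
end

section
/- (Lemma 1) Fix N ≥ 2 and subsets E, A ⊆ P. If the extended linear map T_{E,A} is injective, then for every δ : Fin N → ℝ with δ 0 = 0 and every e : P → ℝ supported on A, the equation system for (E, D δ + e) either has no solution, or e = 0 and its unique solution is (δ̂, ê) = (δ, 0). -/
/-- The ambient linear map `(dh, eh, e') ↦ D dh + eh - e'`. -/
def Lfull (N : ℕ) : ((Fin N → ℝ) × (Pair N → ℝ) × (Pair N → ℝ)) →ₗ[ℝ] (Pair N → ℝ) where
  toFun x := fun p => (x.1 p.1.1 - x.1 p.1.2) + x.2.1 p - x.2.2 p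
  map_add' x y := by funext p; simp; ring
  map_smul' c x := by funext p; simp; ring

/-- The domain of the extended (re-vectorized) map: triples `(dh, eh, e')` with
`dh 0 = 0`, `eh` supported on `E`, `e'` supported on `A`. -/
noncomputable def Dom {N : ℕ} (hN : 0 < N) (E A : Set (Pair N)) :
    Submodule ℝ ((Fin N → ℝ) × (Pair N → ℝ) × (Pair N → ℝ)) where
  carrier := {x | x.1 ⟨0, hN⟩ = 0 ∧ (∀ p ∉ E, x.2.1 p = 0) ∧ (∀ p ∉ A, x.2.2 p = 0)}
  add_mem' := by
    rintro a b ⟨ha0, ha1, ha2⟩ ⟨hb0, hb1, hb2⟩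
    refine ⟨by simp [ha0, hb0], fun p hp => by simp [ha1 p hp, hb1 p hp],
      fun p hp => by simp [ha2 p hp, hb2 p hp]⟩
  zero_mem' := ⟨rfl, fun p _ => rfl, fun p _ => rfl⟩
  smul_mem' := by
    rintro c a ⟨ha0, ha1, ha2⟩
    refine ⟨by simp [ha0], fun p hp => by simp [ha1 p hp], fun p hp => by simp [ha2 p hp]⟩

/-- The extended (re-vectorized) linear map `T_{E,A} (dh, eh, e') = D dh + eh - e'`. -/
noncomputable def Tmap {N : ℕ} (hN : 0 < N) (E A : Set (Pair N)) :
    Dom hN E A →ₗ[ℝ] (Pair N → ℝ) := (Lfull N).comp (Dom hN E A).subtype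

/-- Lemma 1: if the extended linear map `T_{E,A}` is injective, then for every `δ` with
`δ 0 = 0` and every fault vector `e` supported on `A`, the equation system for
`(E, D δ + e)` either has no solution, or `e = 0` and its unique solution is `(δ, 0)`. -/
theorem stmt_9 {N : ℕ} (hN : 2 ≤ N) (E A : Set (Pair N))
    (hinj : Function.Injective (Tmap (show 0 < N by omega) E A))
    (δ : Fin N → ℝ) (hδ : δ ⟨0, by omega⟩ = 0)
    (e : Pair N → ℝ) (he : ∀ p ∉ A, e p = 0) :
    (¬ ∃ (dh : Fin N → ℝ) (eh : Pair N → ℝ),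
        IsSolution (show 0 < N by omega) E (fun p => Dmap δ p + e p) dh eh) ∨
    (e = 0 ∧ ∀ (dh : Fin N → ℝ) (eh : Pair N → ℝ),
        IsSolution (show 0 < N by omega) E (fun p => Dmap δ p + e p) dh eh ↔
          dh = δ ∧ eh = 0) := by
  have hN0 : 0 < N := by omega
  -- key: any solution forces (dh,eh,e)=(δ,0,0)
  have key : ∀ (dh : Fin N → ℝ) (eh : Pair N → ℝ),
      IsSolution hN0 E (fun p => Dmap δ p + e p) dh eh →
      dh = δ ∧ eh = 0 ∧ e = 0 := by
    intro dh eh ⟨h0, hE, heq⟩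
    have hx : ((dh, eh, e) : (Fin N → ℝ) × (Pair N → ℝ) × (Pair N → ℝ)) ∈ Dom hN0 E A :=
      ⟨h0, hE, he⟩
    have hy : ((δ, 0, 0) : (Fin N → ℝ) × (Pair N → ℝ) × (Pair N → ℝ)) ∈ Dom hN0 E A :=
      ⟨hδ, fun p _ => rfl, fun p _ => rfl⟩
    have hT : Tmap hN0 E A ⟨_, hx⟩ = Tmap hN0 E A ⟨_, hy⟩ := by
      funext p
      have := heq p
      simp only [Tmap, Lfull, Dmap, LinearMap.comp_apply, Submodule.subtype_apply,
        LinearMap.coe_mk, AddHom.coe_mk] at this ⊢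
      simp only [Pi.zero_apply]
      linarith
    have := hinj hT
    have h1 : dh = δ := congrArg (fun x => (x : _).1) (congrArg Subtype.val this)
    have h2 : eh = 0 := congrArg (fun x => (x : _).2.1) (congrArg Subtype.val this)
    have h3 : e = 0 := congrArg (fun x => (x : _).2.2) (congrArg Subtype.val this)
    exact ⟨h1, h2, h3⟩
  by_cases hex : ∃ (dh : Fin N → ℝ) (eh : Pair N → ℝ),
      IsSolution hN0 E (fun p => Dmap δ p + e p) dh eh
  · right
    obtain ⟨dh, eh, hsol⟩ := hex
    have he0 := (key dh eh hsol).2.2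
    refine ⟨he0, fun dh' eh' => ⟨fun h => ⟨(key dh' eh' h).1, (key dh' eh' h).2.1⟩, ?_⟩⟩
    rintro ⟨rfl, rfl⟩
    exact ⟨hδ, fun p _ => rfl, fun p => by simp [he0]⟩
  · left; exact hex
end

section
/- Fix N ≥ 3, and let A ⊆ P be any set of pairs containing all N − 1 pairs that involve node 1 (i.e., (1,0) and (i,1) for all i with 1 < i ≤ N−1). Then the linear map sending (δ̂, ê) — with δ̂ : Fin N → ℝ, δ̂ 0 = 0, and ê : P → ℝ supported on A — to D δ̂ + ê is not injective. -/
/-- For `N ≥ 3`, if `A ⊆ P` contains all `N - 1` pairs involving node 1, then the linear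
map sending `(dh, eh)` — with `dh 0 = 0` and `eh` supported on `A` — to `D dh + eh` is
not injective. -/
theorem stmt_13 {N : ℕ} (hN : 3 ≤ N) (A : Set (Pair N))
    (hA : ∀ p : Pair N,
      (p.1.1 = (⟨1, by omega⟩ : Fin N) ∨ p.1.2 = (⟨1, by omega⟩ : Fin N)) → p ∈ A) :
    ¬ Function.Injective
      (fun x : {x : (Fin N → ℝ) × (Pair N → ℝ) //
          x.1 ⟨0, by omega⟩ = 0 ∧ ∀ p ∉ A, x.2 p = 0} =>
        fun p : Pair N => Dmap x.1.1 p + x.1.2 p) := by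
  intro hinj
  set one : Fin N := ⟨1, by omega⟩
  set dh : Fin N → ℝ := fun i => if i = one then 1 else 0 with hdh
  have h0 : dh ⟨0, by omega⟩ = 0 := by
    simp only [hdh, one]
    rw [if_neg]
    intro h
    exact absurd (congrArg Fin.val h) (by simp)
  have hsupp : ∀ p ∉ A, (fun p => -Dmap dh p) p = 0 := by
    intro p hp
    have : Dmap dh p = 0 := by
      by_contra hne
      apply hp
      apply hA
      simp only [Dmap, hdh] at hne
      by_cases h1 : p.1.1 = one
      · exact Or.inl h1
      · by_cases h2 : p.1.2 = one
        · exact Or.inr h2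
        · simp [h1, h2] at hne
    simp [this]
  have key := hinj (a₁ := ⟨(dh, fun p => -Dmap dh p), h0, hsupp⟩)
    (a₂ := ⟨(0, 0), rfl, fun _ _ => rfl⟩) (by
      funext p
      simp [Dmap])
  have : dh = 0 := congrArg (fun x => x.1.1) key
  have := congrFun this one
  simp [hdh] at this
end

section
/- Let N = 4, E = {(3,0)} and A = {(1,0), (2,0)}. Then the kernel of the extended linear map T_{E,A} is one-dimensional; explicitly, it equals the set of triples (δ̂, ê, e′) of the form δ̂ 0 = 0, δ̂ 1 = δ̂ 2 = δ̂ 3 = t, ê (3,0) = −t (ê zero elsewhere), e′ (1,0) = e′ (2,0) = t (e′ zero elsewhere), for t ∈ ℝ. -/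
section

variable {N : ℕ} {hN : 0 < N} {E A : Set (Pair N)}

theorem mem_ker_Tmap_iff {x : Dom hN E A} :
    x ∈ LinearMap.ker (Tmap hN E A) ↔ ∀ p, Dmap x.1.1 p + x.1.2.1 p = x.1.2.2 p := by
  rw [LinearMap.mem_ker, funext_iff]
  exact forall_congr' fun p => sub_eq_zero

variable {x : Dom hN E A}

theorem Dmap_eq_zero_of_mem_ker (hx : x ∈ LinearMap.ker (Tmap hN E A)) {p : Pair N}
    (hpE : p ∉ E) (hpA : p ∉ A) : Dmap x.1.1 p = 0 := by
  simpa [x.2.2.1 p hpE, x.2.2.2 p hpA] using mem_ker_Tmap_iff.1 hx p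

theorem eh_eq_neg_Dmap_of_mem_ker (hx : x ∈ LinearMap.ker (Tmap hN E A)) {p : Pair N}
    (hpA : p ∉ A) : x.1.2.1 p = -Dmap x.1.1 p := by
  linarith [mem_ker_Tmap_iff.1 hx p, x.2.2.2 p hpA]

theorem e'_eq_Dmap_of_mem_ker (hx : x ∈ LinearMap.ker (Tmap hN E A)) {p : Pair N}
    (hpE : p ∉ E) : x.1.2.2 p = Dmap x.1.1 p := by
  linarith [mem_ker_Tmap_iff.1 hx p, x.2.2.1 p hpE]

end

theorem Submodule.finrank_eq_one_of_forall_mem_iff {K V : Type*} [DivisionRing K]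
    [AddCommGroup V] [Module K V] {S : Submodule K V} {v : V} (hv : v ≠ 0)
    (h : ∀ x, x ∈ S ↔ ∃ t : K, x = t • v) : Module.finrank K S = 1 := by
  have hS : S = K ∙ v := by
    ext x
    rw [h, Submodule.mem_span_singleton]
    exact exists_congr fun _ => eq_comm
  rw [hS, finrank_span_singleton hv]

abbrev E₄ : Set (Pair 4) := {⟨(3, 0), by decide⟩}

abbrev A₄ : Set (Pair 4) := {⟨(1, 0), by decide⟩, ⟨(2, 0), by decide⟩}

noncomputable def kerTriple (t : ℝ) : (Fin 4 → ℝ) × (Pair 4 → ℝ) × (Pair 4 → ℝ) :=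
  ((fun i => if i = 0 then 0 else t),
    (-t) • ind (⟨(3, 0), by decide⟩ : Pair 4),
    t • ind (⟨(1, 0), by decide⟩ : Pair 4) + t • ind (⟨(2, 0), by decide⟩ : Pair 4))

theorem kerTriple_eq_smul (t : ℝ) : kerTriple t = t • kerTriple 1 := by
  refine Prod.ext (funext fun i => ?_) (Prod.ext ?_ ?_)
  · by_cases hi : i = 0 <;> simp [kerTriple, hi]
  all_goals simp [kerTriple]

theorem kerTriple_mem_Dom (hN : 0 < 4) (t : ℝ) : kerTriple t ∈ Dom hN E₄ A₄ :=
  ⟨rfl, fun _ hp => by simp_all [kerTriple, ind], fun _ hp => by simp_all [kerTriple, ind]⟩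

theorem kerTriple_mem_ker (hN : 0 < 4) (t : ℝ) :
    (⟨kerTriple t, kerTriple_mem_Dom hN t⟩ : Dom hN E₄ A₄) ∈ LinearMap.ker (Tmap hN E₄ A₄) :=
  mem_ker_Tmap_iff.2 fun p => by fin_cases p <;> simp [kerTriple, Dmap, ind]

theorem eq_kerTriple_of_mem_ker {hN : 0 < 4} {x : Dom hN E₄ A₄}
    (hx : x ∈ LinearMap.ker (Tmap hN E₄ A₄)) : (x : _) = kerTriple (x.1.1 1) := by
  have hδ0 : x.1.1 0 = 0 := x.2.1
  have hδ2 : x.1.1 2 = x.1.1 1 :=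
    sub_eq_zero.1 (Dmap_eq_zero_of_mem_ker (p := ⟨(2, 1), by decide⟩) hx (by decide) (by decide))
  have hδ3 : x.1.1 3 = x.1.1 1 :=
    sub_eq_zero.1 (Dmap_eq_zero_of_mem_ker (p := ⟨(3, 1), by decide⟩) hx (by decide) (by decide))
  refine Prod.ext (funext fun i => ?_) (Prod.ext (funext fun p => ?_) (funext fun p => ?_))
  · fin_cases i <;> simp [kerTriple, hδ0, hδ2, hδ3]
  · by_cases hp : p ∈ E₄
    · obtain rfl : p = ⟨(3, 0), by decide⟩ := hp
      rw [eh_eq_neg_Dmap_of_mem_ker hx (by decide)]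
      simp [kerTriple, ind, Dmap, hδ0, hδ3]
    · simp_all [kerTriple, x.2.2.1 p hp, ind]
  · by_cases hp : p ∈ A₄
    · rw [e'_eq_Dmap_of_mem_ker hx (by rintro rfl; simp at hp)]
      rcases hp with rfl | rfl <;> simp [kerTriple, ind, Dmap, hδ0, hδ2]
    · simp_all [kerTriple, x.2.2.2 p hp, ind]

theorem mem_ker_Tmap_E₄_A₄_iff {hN : 0 < 4} (x : Dom hN E₄ A₄) :
    x ∈ LinearMap.ker (Tmap hN E₄ A₄) ↔ ∃ t, (x : _) = kerTriple t := by
  refine ⟨fun hx => ⟨_, eq_kerTriple_of_mem_ker hx⟩, fun ⟨t, ht⟩ => ?_⟩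
  rw [show x = ⟨kerTriple t, kerTriple_mem_Dom hN t⟩ from Subtype.ext ht]
  exact kerTriple_mem_ker hN t

/-- For `N = 4`, `E = {(3,0)}` and `A = {(1,0), (2,0)}`, the kernel of the extended
linear map `T_{E,A}` is one-dimensional; explicitly, it is the set of triples with
`dh 1 = dh 2 = dh 3 = t`, `eh (3,0) = -t`, `e' (1,0) = e' (2,0) = t` for `t : ℝ`. -/
theorem stmt_16 :
    Module.finrank ℝ
      (LinearMap.ker (Tmap (show (0:ℕ) < 4 by norm_num)
        ({⟨(3, 0), by decide⟩} : Set (Pair 4))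
        ({⟨(1, 0), by decide⟩, ⟨(2, 0), by decide⟩} : Set (Pair 4)))) = 1 ∧
    ∀ x : Dom (show (0:ℕ) < 4 by norm_num)
        ({⟨(3, 0), by decide⟩} : Set (Pair 4))
        ({⟨(1, 0), by decide⟩, ⟨(2, 0), by decide⟩} : Set (Pair 4)),
      x ∈ LinearMap.ker (Tmap (show (0:ℕ) < 4 by norm_num)
        ({⟨(3, 0), by decide⟩} : Set (Pair 4))
        ({⟨(1, 0), by decide⟩, ⟨(2, 0), by decide⟩} : Set (Pair 4))) ↔
      ∃ t : ℝ, (x : (Fin 4 → ℝ) × (Pair 4 → ℝ) × (Pair 4 → ℝ)) =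
        ((fun i => if i = 0 then 0 else t),
          (-t) • ind (⟨(3, 0), by decide⟩ : Pair 4),
          t • ind (⟨(1, 0), by decide⟩ : Pair 4)
            + t • ind (⟨(2, 0), by decide⟩ : Pair 4)) := by
  have hv : (⟨kerTriple 1, kerTriple_mem_Dom _ 1⟩ : Dom (by norm_num) E₄ A₄) ≠ 0 := by
    intro h
    simpa [kerTriple] using congrArg (fun y => y.1.1 1) h
  refine ⟨Submodule.finrank_eq_one_of_forall_mem_iff hv fun x => ?_, mem_ker_Tmap_E₄_A₄_iff⟩
  simp_rw [mem_ker_Tmap_E₄_A₄_iff, Subtype.ext_iff, Submodule.coe_smul, ← kerTriple_eq_smul]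
end

section
/- A 6-node system is 2-resilient. That is, for N = 6, for every A ⊆ P with |A| = 2, every fault vector e : P → ℝ supported on A with e p ≠ 0 for all p ∈ A, and every δ : Fin 6 → ℝ with δ 0 = 0, setting b = D δ + e: (i) for every E ⊆ P with |E| < 2 the equation system for (E, b) has no solution; (ii) the equation system for (A, b) has exactly one solution, namely (δ, e); (iii) for every E ⊆ P with |E| = 2 and E ≠ A the equation system for (E, b) has no solution. -/
lemma cross_card (T : Finset (Fin 6)) (hne : T.Nonempty) (hu : T ≠ Finset.univ) :
    5 ≤ (Finset.univ.filter
      (fun p : Pair 6 => (p.1.1 ∈ T ∧ p.1.2 ∉ T) ∨ (p.1.1 ∉ T ∧ p.1.2 ∈ T))).card := by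
  revert hne hu
  revert T
  decide

lemma key (S : Set (Pair 6)) (hS : S.ncard ≤ 4) (ε : Fin 6 → ℝ) (h0 : ε 0 = 0)
    (h : ∀ p ∉ S, ε p.1.1 = ε p.1.2) : ∀ i, ε i = 0 := by
  classical
  by_contra hc
  push_neg at hc
  obtain ⟨i, hi⟩ := hc
  set T : Finset (Fin 6) := Finset.univ.filter (fun j => ε j ≠ 0) with hT
  have hiT : i ∈ T := by simp [hT, hi]
  have h0T : (0 : Fin 6) ∉ T := by simp [hT, h0]
  have hne : T.Nonempty := ⟨i, hiT⟩
  have hu : T ≠ Finset.univ := fun hEq => h0T (hEq ▸ Finset.mem_univ 0)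
  have hcc := cross_card T hne hu
  -- cross pairs are all in S
  have hsub : (Finset.univ.filter
      (fun p : Pair 6 => (p.1.1 ∈ T ∧ p.1.2 ∉ T) ∨ (p.1.1 ∉ T ∧ p.1.2 ∈ T)))
      ⊆ S.toFinite.toFinset := by
    intro p hp
    simp only [Finset.mem_filter, Finset.mem_univ, true_and] at hp
    rw [Set.Finite.mem_toFinset]
    by_contra hpS
    have := h p hpS
    simp only [hT, Finset.mem_filter, Finset.mem_univ, true_and, not_not] at hp
    rcases hp with ⟨h1, h2⟩ | ⟨h1, h2⟩
    · exact h1 (this.trans h2)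
    · exact h2 (this ▸ h1)
  have : 5 ≤ S.toFinite.toFinset.card := le_trans hcc (Finset.card_le_card hsub)
  rw [← Set.ncard_eq_toFinset_card S S.toFinite] at this
  omega

lemma main_key (A : Set (Pair 6)) (hA : A.ncard = 2)
    (e : Pair 6 → ℝ) (he : ∀ p ∉ A, e p = 0)
    (δ : Fin 6 → ℝ) (hδ : δ 0 = 0)
    (E : Set (Pair 6)) (hE : E.ncard ≤ 2)
    (dh : Fin 6 → ℝ) (eh : Pair 6 → ℝ)
    (hsol : IsSolution (by norm_num) E (fun p => Dmap δ p + e p) dh eh) :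
    dh = δ ∧ eh = e := by
  obtain ⟨h0, hsupp, heq⟩ := hsol
  have hAE : (A ∪ E).ncard ≤ 4 := by
    have := Set.ncard_union_le A E
    omega
  have hk : ∀ i, dh i - δ i = 0 := by
    apply key (A ∪ E) hAE (fun i => dh i - δ i)
    · show dh 0 - δ 0 = 0
      have : dh 0 = 0 := h0
      rw [this, hδ]; ring
    · intro p hp
      have hpA : p ∉ A := fun h => hp (Set.mem_union_left _ h)
      have hpE : p ∉ E := fun h => hp (Set.mem_union_right _ h)
      have h1 := heq p
      have h2 := he p hpA
      have h3 := hsupp p hpE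
      simp only [Dmap] at h1
      rw [h2, h3] at h1
      linarith
  have hdh : dh = δ := funext fun i => by have := hk i; linarith
  constructor
  · exact hdh
  · funext p
    have h1 := heq p
    rw [hdh] at h1
    simp only at h1
    linarith

/-- A 6-node system is 2-resilient. -/
theorem stmt_18 (A : Set (Pair 6)) (hA : A.ncard = 2)
    (e : Pair 6 → ℝ) (he : ∀ p ∉ A, e p = 0) (he' : ∀ p ∈ A, e p ≠ 0)
    (δ : Fin 6 → ℝ) (hδ : δ 0 = 0) :
    (∀ E : Set (Pair 6), E.ncard < 2 →
      ¬ ∃ (dh : Fin 6 → ℝ) (eh : Pair 6 → ℝ),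
        IsSolution (by norm_num) E (fun p => Dmap δ p + e p) dh eh) ∧
    (∀ (dh : Fin 6 → ℝ) (eh : Pair 6 → ℝ),
      IsSolution (by norm_num) A (fun p => Dmap δ p + e p) dh eh ↔
        dh = δ ∧ eh = e) ∧
    (∀ E : Set (Pair 6), E.ncard = 2 → E ≠ A →
      ¬ ∃ (dh : Fin 6 → ℝ) (eh : Pair 6 → ℝ),
        IsSolution (by norm_num) E (fun p => Dmap δ p + e p) dh eh) := by
  refine ⟨?_, ?_, ?_⟩
  · intro E hE ⟨dh, eh, hsol⟩
    obtain ⟨hdh, heh⟩ := main_key A hA e he δ hδ E (by omega) dh eh hsol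
    -- e is supported on E, but A ⊄ E
    have hAsub : ¬ A ⊆ E := by
      intro hsub
      have := Set.ncard_le_ncard hsub E.toFinite
      omega
    obtain ⟨a, haA, haE⟩ := Set.not_subset.mp hAsub
    exact he' a haA (heh ▸ hsol.2.1 a haE)
  · intro dh eh
    constructor
    · exact main_key A hA e he δ hδ A (le_of_eq hA) dh eh
    · rintro ⟨rfl, rfl⟩
      exact ⟨hδ, fun p hp => he p hp, fun p => rfl⟩
  · intro E hE hEA ⟨dh, eh, hsol⟩
    obtain ⟨hdh, heh⟩ := main_key A hA e he δ hδ E (le_of_eq hE) dh eh hsol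
    have hAsub : ¬ A ⊆ E := by
      intro hsub
      exact hEA ((Set.eq_of_subset_of_ncard_le hsub (by omega) E.toFinite).symm)
    obtain ⟨a, haA, haE⟩ := Set.not_subset.mp hAsub
    exact he' a haA (heh ▸ hsol.2.1 a haE)
end
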